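/- With gf as above, the function F(a,b,c,d) := \prod_{j=1}^{c-a} ( (X q^{j-1-2b+a} + Y q^{-j+1+2d-a})(1 - q^{2(b-d)+2j}) ) / ( 2 (1 - q^{2j}) ) satisfies the recursion F(a,b,c,d) = ((X q^{a-2b} + Y q^{2b-a})/2) F(a+1,b,c,d) + F(a,b-1,c,d) for all integers a < c and b > d. -/

import Mathlib

/-!
Put `n = c - a ≥ 1`. Passing from `a` to `a + 1` shifts the index of the `X, Y`-binomials by one,
while passing from `b` to `b - 1` shifts the index of the factors `1 - q^(2(b-d)+2j)` by one and
multiplies every `X, Y`-binomial by `q`. Hence `F(a,b,c,d)` and `F(a,b-1,c,d)` are both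
`F(a+1,b,c,d)` times a single boundary factor, and the recursion reduces to an identity between
these boundary factors, a `q`-analogue of Pascal's rule.
-/

/-- The field of rational functions in the three indeterminates `X`, `Y`, `q`. -/
noncomputable abbrev MyF : Type := FractionRing (MvPolynomial (Fin 3) ℚ)

/-- The indeterminate `X`. -/
noncomputable def Xv : MyF := algebraMap (MvPolynomial (Fin 3) ℚ) MyF (MvPolynomial.X 0)
/-- The indeterminate `Y`. -/
noncomputable def Yv : MyF := algebraMap (MvPolynomial (Fin 3) ℚ) MyF (MvPolynomial.X 1)
/-- The indeterminate `q`. -/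
noncomputable def qv : MyF := algebraMap (MvPolynomial (Fin 3) ℚ) MyF (MvPolynomial.X 2)

/-- `Fgf a b c d = ∏_{j=1}^{c-a} ((X q^{j-1-2b+a} + Y q^{-j+1+2d-a})(1-q^{2(b-d)+2j}))/(2(1-q^{2j}))`
(the closed form of the lattice-path generating function). -/
noncomputable def Fgf (a b c d : ℤ) : MyF :=
  ∏ t ∈ Finset.range (c - a).toNat,
    ((Xv * qv ^ ((t : ℤ) + 1 - 1 - 2 * b + a) + Yv * qv ^ (-((t : ℤ) + 1) + 1 + 2 * d - a)) *
        (1 - qv ^ (2 * (b - d) + 2 * ((t : ℤ) + 1)))) /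
      (2 * (1 - qv ^ (2 * ((t : ℤ) + 1))))

section QPascal

variable {K : Type*} [Field K] {q : K}

/-- A `q`-analogue of Pascal's rule: writing `x = X q^A`, `y = Y q^B`, `s = q^(2m)`, `p = q^N`,
it is the ring identity `(x + y)(1 - s p²) = (x + y s)(1 - p²) + (x p² + y)(1 - s)`. -/
theorem qPascal_rule (hq : q ≠ 0) (X Y : K) (A B m N : ℤ) :
    (X * q ^ A + Y * q ^ B) * (1 - q ^ (2 * m + 2 * N)) =
      (X * q ^ A + Y * q ^ (B + 2 * m)) * (1 - q ^ (2 * N)) +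
        q ^ N * ((X * q ^ (A + N) + Y * q ^ (B - N)) * (1 - q ^ (2 * m))) := by
  have hN : q ^ N ≠ 0 := zpow_ne_zero N hq
  simp only [two_mul, zpow_add₀ hq, zpow_sub₀ hq]
  field_simp
  ring

theorem qPascal_rule_div (hq : q ≠ 0) (X Y : K) (A B m N : ℤ) (hN : 1 - q ^ (2 * N) ≠ 0) :
    (X * q ^ A + Y * q ^ B) * (1 - q ^ (2 * m + 2 * N)) / (2 * (1 - q ^ (2 * N))) =
      (X * q ^ A + Y * q ^ (B + 2 * m)) / 2 +
        q ^ N * ((X * q ^ (A + N) + Y * q ^ (B - N)) * (1 - q ^ (2 * m)) /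
          (2 * (1 - q ^ (2 * N)))) := by
  rw [qPascal_rule hq, add_div, mul_div_mul_right _ _ hN, mul_div_assoc]

end QPascal

theorem qv_ne_zero : qv ≠ 0 :=
  (map_ne_zero_iff _ (IsFractionRing.injective _ _)).mpr (MvPolynomial.X_ne_zero _)

theorem qv_pow_ne_one {n : ℕ} (hn : n ≠ 0) : qv ^ n ≠ 1 := by
  intro h
  have hX : (MvPolynomial.X 2 : MvPolynomial (Fin 3) ℚ) ^ n = 1 :=
    IsFractionRing.injective _ MyF (by rw [map_pow, map_one]; exact h)
  simpa [hn] using congrArg MvPolynomial.constantCoeff hX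

namespace Fgf

open Finset

-- The three parts of the `(t + 1)`-st factor of `Fgf`; the paper's index is `j = t + 1`.

noncomputable def xy (a b d : ℤ) (t : ℕ) : MyF :=
  Xv * qv ^ (a - 2 * b + t) + Yv * qv ^ (2 * d - a - t)

noncomputable def num (b d : ℤ) (t : ℕ) : MyF := 1 - qv ^ (2 * (b - d) + 2 * ((t : ℤ) + 1))

noncomputable def den (t : ℕ) : MyF := 2 * (1 - qv ^ (2 * ((t : ℤ) + 1)))

theorem den_ne_zero (t : ℕ) : den t ≠ 0 := by
  refine mul_ne_zero two_ne_zero ?_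
  rw [sub_ne_zero, ne_comm, show 2 * ((t : ℤ) + 1) = ((2 * (t + 1) : ℕ) : ℤ) by push_cast; ring,
    zpow_natCast]
  exact qv_pow_ne_one (by omega)

theorem xy_succ (a b d : ℤ) (t : ℕ) : xy a b d (t + 1) = xy (a + 1) b d t := by
  simp only [xy]
  push_cast
  ring_nf

theorem xy_sub_one (a b d : ℤ) (t : ℕ) : xy a (b - 1) d t = qv * xy (a + 1) b d t := by
  simp only [xy, mul_add, mul_left_comm qv, ← zpow_one_add₀ qv_ne_zero]
  ring_nf

theorem num_sub_one_succ (b d : ℤ) (t : ℕ) : num (b - 1) d (t + 1) = num b d t := by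
  simp only [num]
  push_cast
  ring_nf

theorem eq_prod (a b c d : ℤ) :
    Fgf a b c d = ∏ t ∈ range (c - a).toNat, xy a b d t * num b d t / den t :=
  prod_congr rfl fun t _ => by simp only [xy, num, den]; ring_nf

theorem eq_mul_succ {a b c d : ℤ} {n : ℕ} (h : (c - a).toNat = n + 1) :
    Fgf a b c d = xy a b d 0 * num b d n / den n * Fgf (a + 1) b c d := by
  rw [eq_prod, eq_prod, h, show (c - (a + 1)).toNat = n by omega]
  simp only [prod_div_distrib, prod_mul_distrib]
  rw [prod_range_succ' (xy a b d), prod_range_succ (num b d), prod_range_succ den]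
  simp only [xy_succ]
  ring

theorem sub_one_eq_mul_succ {a b c d : ℤ} {n : ℕ} (h : (c - a).toNat = n + 1) :
    Fgf a (b - 1) c d =
      qv ^ (n + 1) * (xy (a + 1) b d n * num (b - 1) d 0 / den n) * Fgf (a + 1) b c d := by
  rw [eq_prod, eq_prod, h, show (c - (a + 1)).toNat = n by omega]
  simp only [prod_div_distrib, prod_mul_distrib, xy_sub_one, prod_const, card_range]
  rw [prod_range_succ (xy (a + 1) b d), prod_range_succ' (num (b - 1) d), prod_range_succ den]
  simp only [num_sub_one_succ]
  ring

theorem xy_zero_mul_num_div_den (a b d : ℤ) (n : ℕ) :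
    xy a b d 0 * num b d n / den n =
      (Xv * qv ^ (a - 2 * b) + Yv * qv ^ (2 * b - a)) / 2 +
        qv ^ (n + 1) * (xy (a + 1) b d n * num (b - 1) d 0 / den n) := by
  have h0 : xy a b d 0 = Xv * qv ^ (a - 2 * b) + Yv * qv ^ (2 * d - a) := by simp [xy]
  have hn : xy (a + 1) b d n =
      Xv * qv ^ (a - 2 * b + ((n : ℤ) + 1)) + Yv * qv ^ (2 * d - a - ((n : ℤ) + 1)) := by
    simp only [xy]; ring_nf
  have hnum : num (b - 1) d 0 = 1 - qv ^ (2 * (b - d)) := by simp only [num]; ring_nf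
  rw [h0, hn, hnum, show 2 * b - a = 2 * d - a + 2 * (b - d) by ring, ← zpow_natCast,
    Nat.cast_succ]
  exact qPascal_rule_div qv_ne_zero Xv Yv _ _ _ _ (right_ne_zero_of_mul (den_ne_zero n))

end Fgf

theorem Fgf_recursion_general (a b c d : ℤ) (hac : a < c) :
    Fgf a b c d =
      (Xv * qv ^ (a - 2 * b) + Yv * qv ^ (2 * b - a)) / 2 * Fgf (a + 1) b c d
        + Fgf a (b - 1) c d := by
  obtain ⟨n, hn⟩ : ∃ n : ℕ, (c - a).toNat = n + 1 := ⟨(c - a).toNat - 1, by omega⟩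
  rw [Fgf.eq_mul_succ hn, Fgf.sub_one_eq_mul_succ hn, Fgf.xy_zero_mul_num_div_den]
  ring

/-- The closed form `Fgf` satisfies the lattice-path recursion
`F(a,b,c,d) = ((X q^{a-2b} + Y q^{2b-a})/2) F(a+1,b,c,d) + F(a,b-1,c,d)`
for all integers `a < c` and `b > d`. -/
theorem Fgf_recursion (a b c d : ℤ) (hac : a < c) (hbd : d < b) :
    Fgf a b c d =
      (Xv * qv ^ (a - 2 * b) + Yv * qv ^ (2 * b - a)) / 2 * Fgf (a + 1) b c d
        + Fgf a (b - 1) c d :=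
  Fgf_recursion_general a b c d hac
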